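/- Let θ₁, θ₂, θ₃ ∈ (0, π/2) with θ₁ + θ₂ + θ₃ = π. Then T(θ₁,θ₂,θ₃) − A(θ₁,θ₂,θ₃) ≤ 3√3 − 3π/2, with equality if and only if θ₁ = θ₂ = θ₃ = π/3. That is, the uncovered area T − A attains its maximum value only at the equilateral configuration. -/

import Mathlib

/-!
The uncovered area splits as `∑ f θᵢ` with `f θ = tan θ - (π/2 - θ) tan² θ`, so it suffices that `f`
is strictly concave on `(0, π/2)`: Jensen's inequality then bounds `∑ f θᵢ` by `3 f (π/3)`, with
equality only when the three angles agree. With `u = tan θ` one finds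
`f'' = (1 + u²) (6u - (π - 2θ)(1 + 3u²))`, and since `π/2 - θ = arctan u⁻¹` its sign is that of
`3v/(3 + v²) - arctan v` at `v = u⁻¹`; this is negative for `v > 0` because the difference vanishes
at `0` and has derivative `-4v⁴/((1 + v²)(3 + v²)²)`.
-/

open Real

/-- `t θ = tan θ`: twice the area of a right triangle with unit leg and adjacent angle `θ`. -/
noncomputable def tFun (θ : ℝ) : ℝ := tan θ

/-- `a θ = (π/2 − θ)·tan²θ`: the area of the circular sector of radius `tan θ`. -/
noncomputable def aFun (θ : ℝ) : ℝ := (π / 2 - θ) * tan θ ^ 2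

/-- Area of the triangle of centers, normalized to inradius `1`. -/
noncomputable def Tangles (θ₁ θ₂ θ₃ : ℝ) : ℝ := tFun θ₁ + tFun θ₂ + tFun θ₃

/-- Area of the triangle covered by the three circles. -/
noncomputable def Aangles (θ₁ θ₂ θ₃ : ℝ) : ℝ := aFun θ₁ + aFun θ₂ + aFun θ₃

open Set

section ThreePointJensen

variable {E : Type*} [AddCommGroup E] [Module ℝ E] {s : Set E} {f : E → ℝ} {a b c : E}

theorem ConcaveOn.add_add_le_three_mul (hf : ConcaveOn ℝ s f) (ha : a ∈ s) (hb : b ∈ s)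
    (hc : c ∈ s) : f a + f b + f c ≤ 3 * f ((3 : ℝ)⁻¹ • (a + b + c)) := by
  have h := hf.le_map_sum (t := Finset.univ) (w := fun _ => (3 : ℝ)⁻¹) (p := ![a, b, c])
    (by simp) (by simp) (by simp [Fin.forall_fin_succ, ha, hb, hc])
  simp only [Fin.sum_univ_three, Matrix.cons_val, smul_eq_mul, ← smul_add] at h
  linarith

theorem StrictConcaveOn.add_add_eq_three_mul_iff (hf : StrictConcaveOn ℝ s f) (ha : a ∈ s)
    (hb : b ∈ s) (hc : c ∈ s) :
    f a + f b + f c = 3 * f ((3 : ℝ)⁻¹ • (a + b + c)) ↔ a = b ∧ b = c := by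
  have h := hf.map_sum_eq_iff_of_pos (t := Finset.univ) (w := fun _ => (3 : ℝ)⁻¹)
    (p := ![a, b, c]) (by simp) (by simp) (by simp [Fin.forall_fin_succ, ha, hb, hc])
  simp only [Fin.sum_univ_three, Matrix.cons_val, smul_eq_mul, ← smul_add] at h
  constructor
  · intro heq
    have hp := h.1 (by linarith)
    exact ⟨hp (Finset.mem_univ 0) (Finset.mem_univ 1), hp (Finset.mem_univ 1) (Finset.mem_univ 2)⟩
  · rintro ⟨rfl, rfl⟩
    linarith [h.2 fun j _ k _ => by fin_cases j <;> fin_cases k <;> rfl]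

end ThreePointJensen

theorem three_mul_div_lt_arctan {x : ℝ} (hx : 0 < x) : 3 * x / (3 + x ^ 2) < arctan x := by
  let g : ℝ → ℝ := fun y => arctan y - 3 * y / (3 + y ^ 2)
  have hg' (y : ℝ) : HasDerivAt g (4 * y ^ 4 / ((1 + y ^ 2) * (3 + y ^ 2) ^ 2)) y := by
    have hq : HasDerivAt (fun y : ℝ => 3 * y / (3 + y ^ 2))
        ((3 * (3 + y ^ 2) - 3 * y * (2 * y)) / (3 + y ^ 2) ^ 2) y := by
      simpa using ((hasDerivAt_id y).const_mul 3).fun_div ((hasDerivAt_pow 2 y).const_add 3)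
        (by positivity)
    refine ((hasDerivAt_arctan y).fun_sub hq).congr_deriv ?_
    field_simp
    ring
  have hmono : StrictMonoOn g (Ici 0) := by
    refine strictMonoOn_of_deriv_pos (convex_Ici 0)
      (fun y _ => (hg' y).continuousAt.continuousWithinAt) fun y hy => ?_
    rw [interior_Ici] at hy
    rw [(hg' y).deriv]
    have hy : 0 < y := hy
    positivity
  simpa [g] using hmono (mem_Ici.2 le_rfl) hx.le hx

theorem six_mul_tan_lt {θ : ℝ} (h₀ : 0 < θ) (h₁ : θ < π / 2) :
    6 * tan θ < (π - 2 * θ) * (1 + 3 * tan θ ^ 2) := by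
  have ht : 0 < tan θ := tan_pos_of_pos_of_lt_pi_div_two h₀ h₁
  have hθ : arctan (tan θ)⁻¹ = π / 2 - θ := by
    rw [arctan_inv_of_pos ht, arctan_tan (by linarith) h₁]
  have h := three_mul_div_lt_arctan (inv_pos.2 ht)
  rw [hθ, lt_sub_iff_add_lt] at h
  field_simp at h
  nlinarith

theorem hasDerivAt_tan_one_add_tan_sq {x : ℝ} (h : cos x ≠ 0) :
    HasDerivAt tan (1 + tan x ^ 2) x := by
  simpa [← inv_one_add_tan_sq h] using hasDerivAt_tan h

noncomputable def uncoveredArea (θ : ℝ) : ℝ := tFun θ - aFun θ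

theorem Tangles_sub_Aangles (θ₁ θ₂ θ₃ : ℝ) :
    Tangles θ₁ θ₂ θ₃ - Aangles θ₁ θ₂ θ₃ =
      uncoveredArea θ₁ + uncoveredArea θ₂ + uncoveredArea θ₃ := by
  simp only [Tangles, Aangles, uncoveredArea]
  ring

noncomputable def uncoveredAreaDeriv (θ : ℝ) : ℝ :=
  1 + 2 * tan θ ^ 2 - (π - 2 * θ) * tan θ * (1 + tan θ ^ 2)

theorem hasDerivAt_uncoveredArea {θ : ℝ} (h : cos θ ≠ 0) :
    HasDerivAt uncoveredArea (uncoveredAreaDeriv θ) θ := by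
  have ht := hasDerivAt_tan_one_add_tan_sq h
  refine (ht.fun_sub (((hasDerivAt_id θ).const_sub (π / 2)).fun_mul (ht.fun_pow 2))).congr_deriv ?_
  simp only [uncoveredAreaDeriv, id_eq]
  ring

theorem hasDerivAt_uncoveredAreaDeriv {θ : ℝ} (h : cos θ ≠ 0) :
    HasDerivAt uncoveredAreaDeriv
      ((1 + tan θ ^ 2) * (6 * tan θ - (π - 2 * θ) * (1 + 3 * tan θ ^ 2))) θ := by
  have ht := hasDerivAt_tan_one_add_tan_sq h
  have hsq := (ht.fun_pow 2).const_add 1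
  refine ((((ht.fun_pow 2).const_mul 2).const_add 1).fun_sub
    ((((hasDerivAt_id θ).const_mul 2).const_sub π).fun_mul ht |>.fun_mul hsq)).congr_deriv ?_
  simp only [id_eq]
  ring

theorem strictConcaveOn_uncoveredArea : StrictConcaveOn ℝ (Ioo 0 (π / 2)) uncoveredArea := by
  have hcos (θ : ℝ) (hθ : θ ∈ Ioo 0 (π / 2)) : cos θ ≠ 0 :=
    (cos_pos_of_mem_Ioo ⟨by linarith [hθ.1, pi_pos], hθ.2⟩).ne'
  refine StrictAntiOn.strictConcaveOn_of_deriv (convex_Ioo _ _)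
    (fun θ hθ => (hasDerivAt_uncoveredArea (hcos θ hθ)).continuousAt.continuousWithinAt) ?_
  rw [interior_Ioo]
  refine StrictAntiOn.congr ?_ fun θ hθ => (hasDerivAt_uncoveredArea (hcos θ hθ)).deriv.symm
  refine strictAntiOn_of_deriv_neg (convex_Ioo _ _)
    (fun θ hθ => (hasDerivAt_uncoveredAreaDeriv (hcos θ hθ)).continuousAt.continuousWithinAt)
    fun θ hθ => ?_
  rw [interior_Ioo] at hθ
  rw [(hasDerivAt_uncoveredAreaDeriv (hcos θ hθ)).deriv]
  exact mul_neg_of_pos_of_neg (by positivity) (sub_neg.2 (six_mul_tan_lt hθ.1 hθ.2))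

theorem uncoveredArea_pi_div_three : uncoveredArea (π / 3) = √3 - π / 2 := by
  rw [uncoveredArea, tFun, aFun, tan_pi_div_three, sq_sqrt zero_le_three]
  ring

theorem uncovered_area_max (θ₁ θ₂ θ₃ : ℝ)
    (h₁ : θ₁ ∈ Set.Ioo 0 (π / 2)) (h₂ : θ₂ ∈ Set.Ioo 0 (π / 2))
    (h₃ : θ₃ ∈ Set.Ioo 0 (π / 2)) (hsum : θ₁ + θ₂ + θ₃ = π) :
    Tangles θ₁ θ₂ θ₃ - Aangles θ₁ θ₂ θ₃ ≤ 3 * Real.sqrt 3 - 3 * π / 2 ∧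
      (Tangles θ₁ θ₂ θ₃ - Aangles θ₁ θ₂ θ₃ = 3 * Real.sqrt 3 - 3 * π / 2 ↔
        θ₁ = π / 3 ∧ θ₂ = π / 3 ∧ θ₃ = π / 3) := by
  have hmean : (3 : ℝ)⁻¹ • (θ₁ + θ₂ + θ₃) = π / 3 := by
    rw [hsum, smul_eq_mul]
    ring
  have hmax : 3 * uncoveredArea ((3 : ℝ)⁻¹ • (θ₁ + θ₂ + θ₃)) = 3 * √3 - 3 * π / 2 := by
    rw [hmean, uncoveredArea_pi_div_three]
    ring
  rw [Tangles_sub_Aangles, ← hmax,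
    strictConcaveOn_uncoveredArea.add_add_eq_three_mul_iff h₁ h₂ h₃]
  refine ⟨strictConcaveOn_uncoveredArea.concaveOn.add_add_le_three_mul h₁ h₂ h₃, ?_, ?_⟩
  · rintro ⟨rfl, rfl⟩
    refine ⟨?_, ?_, ?_⟩ <;> linarith
  · rintro ⟨rfl, rfl, rfl⟩
    exact ⟨rfl, rfl⟩
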